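/- In the superman-kryptonite tournament T on n agents, under the Randomized Death Match rule, agent 1 wins with probability 1 − 2/n and agent n wins with probability 2/(n(n−1)). -/

import Mathlib

open Classical Finset

structure Tournament (n : ℕ) where
  beats : Fin n → Fin n → Prop
  irrefl : ∀ i, ¬ beats i i
  total : ∀ i j, i ≠ j → (beats i j ↔ ¬ beats j i)

/-- `r` maps each tournament to a probability distribution over the agents. -/
def IsProbRule {n : ℕ} (r : Tournament n → Fin n → ℝ) : Prop :=
  ∀ T, (∀ i, 0 ≤ r T i) ∧ ∑ i, r T i = 1

/-- `T` and `T'` agree on all matches except possibly the one between `i` and `j`. -/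
def Adjacent {n : ℕ} (i j : Fin n) (T T' : Tournament n) : Prop :=
  ∀ a b, ¬((a = i ∧ b = j) ∨ (a = j ∧ b = i)) → (T.beats a b ↔ T'.beats a b)

def CondorcetConsistent {n : ℕ} (r : Tournament n → Fin n → ℝ) : Prop :=
  ∀ T i, (∀ j, j ≠ i → T.beats i j) → r T i = 1

def MonotoneRule {n : ℕ} (r : Tournament n → Fin n → ℝ) : Prop :=
  ∀ i j (T T' : Tournament n), i ≠ j → Adjacent i j T T' → T ≠ T' →
    T.beats i j → r T' i ≤ r T i

/-- 2-NM_λ-α. -/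
def TwoNM {n : ℕ} (lam alpha : ℝ) (r : Tournament n → Fin n → ℝ) : Prop :=
  ∀ i j (T T' : Tournament n), i ≠ j → Adjacent i j T T' → T ≠ T' →
    r T' i + r T' j ≤
      r T i + r T j + lam * max (r T i - r T' i) (r T j - r T' j) + alpha
/-- The probability that agent `i` wins the Randomized Death Match among the
remaining agents `S`: repeatedly a uniformly random ordered pair of distinct
remaining agents is chosen and the loser of their match is eliminated, until one
agent remains. -/
noncomputable def rdmProb {n : ℕ} (T : Tournament n) (S : Finset (Fin n))
    (i : Fin n) : ℝ :=
  if h : S.card ≤ 1 then (if i ∈ S then 1 else 0)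
  else ((S.card * (S.card - 1) : ℕ) : ℝ)⁻¹ *
    ∑ p ∈ S.offDiag.attach,
      rdmProb T (S.erase (if T.beats p.1.1 p.1.2 then p.1.2 else p.1.1)) i
termination_by S.card
decreasing_by
  · have hp := Finset.mem_offDiag.mp p.2
    exact Finset.card_erase_lt_of_mem (by split <;> tauto)

/-!
While superman `z` and kryptonite `L` are both among the `m` remaining agents, the agent eliminated
next is `x` with probability `2 d(x) / (m (m - 1))`, where `d(x)` counts the remaining agents that
beat `x`. Superman is beaten only by kryptonite and kryptonite by everybody else, so they are
eliminated with probabilities `2 / (m (m - 1))` and `2 (m - 2) / (m (m - 1))`, while eliminating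
anybody else leaves a smaller instance of the same configuration. Once kryptonite is gone superman
beats everybody and wins; once superman is gone kryptonite loses every match and wins only if
nobody else is left. Induction on `m` then gives `1 - 2 / m` for superman and `2 / (m (m - 1))`
for kryptonite.
-/

namespace Tournament

variable {n : ℕ} (T : Tournament n)

theorem not_beats_of_beats {a b : Fin n} (h : T.beats a b) : ¬ T.beats b a := by
  have hab : a ≠ b := by rintro rfl; exact T.irrefl a h
  exact (T.total a b hab).mp h

theorem beats_of_not_beats {a b : Fin n} (hab : a ≠ b) (h : ¬ T.beats a b) : T.beats b a := by
  by_contra h'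
  exact h ((T.total a b hab).mpr h')

noncomputable def loser (a b : Fin n) : Fin n := if T.beats a b then b else a

noncomputable def inDegree (S : Finset (Fin n)) (x : Fin n) : ℕ := #{y ∈ S | T.beats y x}

theorem loser_mem {S : Finset (Fin n)} {a b : Fin n} (ha : a ∈ S) (hb : b ∈ S) :
    T.loser a b ∈ S := by
  unfold loser; split_ifs <;> assumption

theorem loser_ne_of_forall_beats {S : Finset (Fin n)} {i a b : Fin n}
    (hi : ∀ j ∈ S, j ≠ i → T.beats i j) (ha : a ∈ S) (hb : b ∈ S) (hab : a ≠ b) :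
    T.loser a b ≠ i := by
  unfold loser
  split_ifs with h <;> rintro rfl
  · exact T.not_beats_of_beats h (hi a ha hab)
  · exact h (hi b hb hab.symm)

theorem loser_eq_of_forall_beaten {S : Finset (Fin n)} {i a b : Fin n}
    (hi : ∀ j ∈ S, j ≠ i → T.beats j i) (ha : a ∈ S) (hb : b ∈ S) (hab : a ≠ b)
    (hmem : a = i ∨ b = i) : T.loser a b = i := by
  unfold loser
  rcases hmem with rfl | rfl
  · rw [if_neg (T.not_beats_of_beats (hi b hb hab.symm))]
  · rw [if_pos (hi a ha hab)]

-- The ordered pairs `(a, b)` and `(b, a)` eliminate the same agent, whence the factor `2`.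
theorem sum_offDiag_loser (S : Finset (Fin n)) (g : Fin n → ℝ) :
    ∑ p ∈ S.offDiag, g (T.loser p.1 p.2) = 2 * ∑ x ∈ S, (T.inDegree S x : ℝ) * g x := by
  have hsplit : ∀ p ∈ S.offDiag, g (T.loser p.1 p.2) =
      (if T.beats p.1 p.2 then g p.2 else 0) + (if T.beats p.2 p.1 then g p.1 else 0) := by
    rintro ⟨a, b⟩ hp
    have hab : a ≠ b := (mem_offDiag.mp hp).2.2
    unfold loser
    by_cases h : T.beats a b
    · simp [h, T.not_beats_of_beats h]
    · simp [h, T.beats_of_not_beats hab h]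
  have hswap : ∑ p ∈ S.offDiag, (if T.beats p.2 p.1 then g p.1 else 0) =
      ∑ p ∈ S.offDiag, (if T.beats p.1 p.2 then g p.2 else 0) :=
    sum_nbij' Prod.swap Prod.swap (fun p hp => by simp_all [eq_comm])
      (fun p hp => by simp_all [eq_comm]) (by simp) (by simp) (by simp)
  have hdiag : ∑ p ∈ S.offDiag, (if T.beats p.1 p.2 then g p.2 else 0) =
      ∑ p ∈ S ×ˢ S, (if T.beats p.1 p.2 then g p.2 else 0) := by
    refine sum_subset (fun p hp => ?_) (fun p hp hnot => ?_)
    · exact mem_product.mpr ⟨(mem_offDiag.mp hp).1, (mem_offDiag.mp hp).2.1⟩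
    · have : p.1 = p.2 := by
        by_contra hne
        exact hnot (mem_offDiag.mpr ⟨(mem_product.mp hp).1, (mem_product.mp hp).2, hne⟩)
      rw [if_neg (this ▸ T.irrefl p.1)]
  rw [sum_congr rfl hsplit, sum_add_distrib, hswap, ← two_mul, hdiag, sum_product_right]
  congr 1
  refine sum_congr rfl fun x _ => ?_
  rw [← sum_filter]
  simp only [sum_const, nsmul_eq_mul, inDegree]

theorem sum_inDegree (S : Finset (Fin n)) :
    2 * ∑ x ∈ S, (T.inDegree S x : ℝ) = #S * (#S - 1) := by
  have h := T.sum_offDiag_loser S (fun _ => 1)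
  simp only [mul_one, sum_const, nsmul_eq_mul, offDiag_card] at h
  rw [← h, Nat.cast_sub (Nat.le_mul_self _)]
  push_cast
  ring

end Tournament

open Tournament

section
variable {n : ℕ} (T : Tournament n)

theorem rdmProb_eq_sum_offDiag {S : Finset (Fin n)} (hS : 2 ≤ #S) (i : Fin n) :
    rdmProb T S i = (#S * (#S - 1) : ℝ)⁻¹ *
      ∑ p ∈ S.offDiag, rdmProb T (S.erase (T.loser p.1 p.2)) i := by
  rw [rdmProb, dif_neg (by omega), Nat.cast_mul, Nat.cast_sub (by omega), Nat.cast_one]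
  exact congrArg _ (sum_attach S.offDiag fun p => rdmProb T (S.erase (T.loser p.1 p.2)) i)

theorem rdmProb_eq_of_forall_offDiag {S : Finset (Fin n)} (hS : 2 ≤ #S) {i : Fin n} {c : ℝ}
    (h : ∀ p ∈ S.offDiag, rdmProb T (S.erase (T.loser p.1 p.2)) i = c) :
    rdmProb T S i = c := by
  have hcard : (#S.offDiag : ℝ) = #S * (#S - 1) := by
    rw [offDiag_card, Nat.cast_sub (Nat.le_mul_self _)]
    push_cast
    ring
  have hpos : (#S * (#S - 1) : ℝ) ≠ 0 := by
    have : (2 : ℝ) ≤ #S := by exact_mod_cast hS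
    apply mul_ne_zero <;> linarith
  rw [rdmProb_eq_sum_offDiag T hS, sum_congr rfl h, sum_const, nsmul_eq_mul, hcard,
    ← mul_assoc, inv_mul_cancel₀ hpos, one_mul]

theorem rdmProb_eq_zero_of_notMem {S : Finset (Fin n)} {i : Fin n} (hi : i ∉ S) : rdmProb T S i = 0 := by
  induction S using Finset.strongInduction with
  | H S ih =>
    by_cases hS : #S ≤ 1
    · rw [rdmProb, dif_pos hS, if_neg hi]
    · refine rdmProb_eq_of_forall_offDiag T (by omega) fun p hp => ?_
      obtain ⟨ha, hb, -⟩ := mem_offDiag.mp hp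
      exact ih _ (erase_ssubset (T.loser_mem ha hb)) fun h => hi (mem_of_mem_erase h)

theorem rdmProb_eq_one_of_forall_beats {S : Finset (Fin n)} {i : Fin n} (hiS : i ∈ S)
    (hi : ∀ j ∈ S, j ≠ i → T.beats i j) : rdmProb T S i = 1 := by
  induction S using Finset.strongInduction with
  | H S ih =>
    by_cases hS : #S ≤ 1
    · rw [rdmProb, dif_pos hS, if_pos hiS]
    · refine rdmProb_eq_of_forall_offDiag T (by omega) fun p hp => ?_
      obtain ⟨ha, hb, hab⟩ := mem_offDiag.mp hp
      have hne := T.loser_ne_of_forall_beats hi ha hb hab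
      exact ih _ (erase_ssubset (T.loser_mem ha hb)) (mem_erase.mpr ⟨hne.symm, hiS⟩)
        fun j hj => hi j (mem_of_mem_erase hj)

theorem rdmProb_eq_zero_of_forall_beaten {S : Finset (Fin n)} {i : Fin n} (hiS : i ∈ S) (hS : 2 ≤ #S)
    (hi : ∀ j ∈ S, j ≠ i → T.beats j i) : rdmProb T S i = 0 := by
  induction S using Finset.strongInduction with
  | H S ih =>
    refine rdmProb_eq_of_forall_offDiag T hS fun p hp => ?_
    obtain ⟨ha, hb, hab⟩ := mem_offDiag.mp hp
    by_cases hmem : p.1 = i ∨ p.2 = i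
    · rw [T.loser_eq_of_forall_beaten hi ha hb hab hmem]
      exact rdmProb_eq_zero_of_notMem T (notMem_erase i S)
    · rw [not_or] at hmem
      have hl : T.loser p.1 p.2 ≠ i := by unfold loser; split_ifs <;> simp [hmem]
      have hcard : 2 ≤ #(S.erase (T.loser p.1 p.2)) := by
        have h3 : ({p.1, p.2, i} : Finset (Fin n)) ⊆ S := by
          intro x hx; simp only [mem_insert, mem_singleton] at hx
          rcases hx with rfl | rfl | rfl <;> assumption
        have := card_le_card h3
        rw [card_insert_of_notMem (by simp [hab, hmem.1]),
          card_insert_of_notMem (by simp [hmem.2]), card_singleton] at this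
        rw [card_erase_of_mem (T.loser_mem ha hb)]
        omega
      exact ih _ (erase_ssubset (T.loser_mem ha hb)) (mem_erase.mpr ⟨hl.symm, hiS⟩) hcard
        fun j hj => hi j (mem_of_mem_erase hj)

theorem rdmProb_eq_sum_inDegree {S : Finset (Fin n)} (hS : 2 ≤ #S) (i : Fin n) :
    rdmProb T S i = 2 / (#S * (#S - 1)) *
      ∑ x ∈ S, (T.inDegree S x : ℝ) * rdmProb T (S.erase x) i := by
  rw [rdmProb_eq_sum_offDiag T hS, T.sum_offDiag_loser S fun x => rdmProb T (S.erase x) i]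
  ring

end

structure IsSupermanKryptonite {n : ℕ} (T : Tournament n) (z L : Fin n) : Prop where
  kryptonite_beats_superman : T.beats L z
  superman_beats : ∀ j, j ≠ z → j ≠ L → T.beats z j
  beats_kryptonite : ∀ j, j ≠ z → j ≠ L → T.beats j L

namespace IsSupermanKryptonite

variable {n : ℕ} {T : Tournament n} {z L : Fin n} (hT : IsSupermanKryptonite T z L)
include hT

theorem superman_ne_kryptonite : z ≠ L := by
  rintro rfl
  exact T.irrefl z hT.kryptonite_beats_superman

theorem inDegree_superman {S : Finset (Fin n)} (hL : L ∈ S) : T.inDegree S z = 1 := by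
  rw [inDegree, card_eq_one]
  refine ⟨L, eq_singleton_iff_unique_mem.mpr ⟨mem_filter.mpr ⟨hL, hT.kryptonite_beats_superman⟩,
    fun y hy => ?_⟩⟩
  obtain ⟨-, hyz⟩ := mem_filter.mp hy
  by_contra hyL
  have hne : y ≠ z := by rintro rfl; exact T.irrefl y hyz
  exact T.not_beats_of_beats (hT.superman_beats y hne hyL) hyz

theorem inDegree_kryptonite {S : Finset (Fin n)} (hz : z ∈ S) (hL : L ∈ S) :
    T.inDegree S L = #S - 2 := by
  have hfilter : ({y ∈ S | T.beats y L} : Finset (Fin n)) = (S.erase z).erase L := by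
    ext y
    simp only [mem_filter, mem_erase]
    constructor
    · rintro ⟨hy, hyL⟩
      refine ⟨?_, ?_, hy⟩
      · rintro rfl; exact T.irrefl y hyL
      · rintro rfl; exact T.not_beats_of_beats hT.kryptonite_beats_superman hyL
    · rintro ⟨hyL, hyz, hy⟩
      exact ⟨hy, hT.beats_kryptonite y hyz hyL⟩
  rw [inDegree, hfilter, card_erase_of_mem (mem_erase.mpr ⟨hT.superman_ne_kryptonite.symm, hL⟩),
    card_erase_of_mem hz]
  omega

theorem two_le_card {S : Finset (Fin n)} (hz : z ∈ S) (hL : L ∈ S) : 2 ≤ #S :=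
  one_lt_card.mpr ⟨z, hz, L, hL, hT.superman_ne_kryptonite⟩

theorem rdmProb_eq {S : Finset (Fin n)} (hz : z ∈ S) (hL : L ∈ S) (i : Fin n) (c : ℝ)
    (hc : ∀ x ∈ S, x ≠ z → x ≠ L → rdmProb T (S.erase x) i = c) :
    rdmProb T S i = c + 2 * (rdmProb T (S.erase z) i - c +
      (#S - 2) * (rdmProb T (S.erase L) i - c)) / (#S * (#S - 1)) := by
  have hS := hT.two_le_card hz hL
  have hdev : ∑ x ∈ S, (T.inDegree S x : ℝ) * (rdmProb T (S.erase x) i - c) =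
      (rdmProb T (S.erase z) i - c) + (#S - 2) * (rdmProb T (S.erase L) i - c) := by
    rw [sum_eq_add_of_mem z L hz hL hT.superman_ne_kryptonite
      (fun x hx hne => by rw [hc x hx hne.1 hne.2, sub_self, mul_zero]),
      hT.inDegree_superman hL, hT.inDegree_kryptonite hz hL, Nat.cast_sub hS]
    push_cast
    ring
  have hsum : ∑ x ∈ S, (T.inDegree S x : ℝ) * rdmProb T (S.erase x) i =
      c * (#S * (#S - 1)) / 2 + ((rdmProb T (S.erase z) i - c) +
        (#S - 2) * (rdmProb T (S.erase L) i - c)) := by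
    rw [← hdev, ← T.sum_inDegree S, mul_sum, mul_sum, sum_div, ← sum_add_distrib]
    exact sum_congr rfl fun x _ => by ring
  have h2 : (2 : ℝ) ≤ #S := by exact_mod_cast hS
  have h0 : (#S : ℝ) ≠ 0 := by linarith
  have h1 : (#S : ℝ) - 1 ≠ 0 := by linarith
  rw [rdmProb_eq_sum_inDegree T hS, hsum]
  field_simp

theorem rdmProb_superman {S : Finset (Fin n)} (hz : z ∈ S) (hL : L ∈ S) :
    rdmProb T S z = 1 - 2 / #S := by
  induction S using Finset.strongInduction with
  | H S ih =>
    have hS := hT.two_le_card hz hL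
    have hc : ∀ x ∈ S, x ≠ z → x ≠ L → rdmProb T (S.erase x) z = 1 - 2 / (#S - 1) := by
      intro x hx hxz hxL
      rw [ih _ (erase_ssubset hx) (mem_erase.mpr ⟨hxz.symm, hz⟩) (mem_erase.mpr ⟨hxL.symm, hL⟩),
        card_erase_of_mem hx, Nat.cast_sub (by omega), Nat.cast_one]
    have hgz : rdmProb T (S.erase z) z = 0 := rdmProb_eq_zero_of_notMem T (notMem_erase z S)
    have hgL : rdmProb T (S.erase L) z = 1 :=
      rdmProb_eq_one_of_forall_beats T (mem_erase.mpr ⟨hT.superman_ne_kryptonite, hz⟩)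
        fun j hj hjz => hT.superman_beats j hjz (ne_of_mem_erase hj)
    have h2 : (2 : ℝ) ≤ #S := by exact_mod_cast hS
    have h0 : (#S : ℝ) ≠ 0 := by linarith
    have h1 : (#S : ℝ) - 1 ≠ 0 := by linarith
    rw [hT.rdmProb_eq hz hL z _ hc, hgz, hgL]
    field_simp
    ring

theorem rdmProb_kryptonite {S : Finset (Fin n)} (hz : z ∈ S) (hL : L ∈ S) :
    rdmProb T S L = 2 / (#S * (#S - 1)) := by
  induction S using Finset.strongInduction with
  | H S ih =>
    have hS := hT.two_le_card hz hL
    have hgL : rdmProb T (S.erase L) L = 0 := rdmProb_eq_zero_of_notMem T (notMem_erase L S)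
    rcases hS.eq_or_lt with hS2 | hS3
    · have hpair : S = {z, L} := (eq_of_subset_of_card_le (by simp [insert_subset_iff, hz, hL])
        (by rw [← hS2, card_pair hT.superman_ne_kryptonite])).symm
      have hgz : rdmProb T (S.erase z) L = 1 := by
        rw [hpair, erase_insert (by simp [hT.superman_ne_kryptonite])]
        exact rdmProb_eq_one_of_forall_beats T (mem_singleton_self L) (by simp)
      rw [hT.rdmProb_eq hz hL L 0 (by simp [hpair]), hgz, hgL, ← hS2]
      norm_num
    · have hc : ∀ x ∈ S, x ≠ z → x ≠ L →
          rdmProb T (S.erase x) L = 2 / ((#S - 1) * (#S - 2)) := by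
        intro x hx hxz hxL
        rw [ih _ (erase_ssubset hx) (mem_erase.mpr ⟨hxz.symm, hz⟩) (mem_erase.mpr ⟨hxL.symm, hL⟩),
          card_erase_of_mem hx, Nat.cast_sub (by omega), Nat.cast_one]
        ring
      have hgz : rdmProb T (S.erase z) L = 0 := by
        refine rdmProb_eq_zero_of_forall_beaten T (mem_erase.mpr ⟨hT.superman_ne_kryptonite.symm, hL⟩)
          (by rw [card_erase_of_mem hz]; omega) fun j hj hjL => ?_
        exact hT.beats_kryptonite j (ne_of_mem_erase hj) hjL
      have h3 : (3 : ℝ) ≤ #S := by exact_mod_cast hS3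
      have h0 : (#S : ℝ) ≠ 0 := by linarith
      have h1 : (#S : ℝ) - 1 ≠ 0 := by linarith
      have h2 : (#S : ℝ) - 2 ≠ 0 := by linarith
      rw [hT.rdmProb_eq hz hL L _ hc, hgz, hgL]
      field_simp
      ring

end IsSupermanKryptonite

/-- In the superman-kryptonite tournament on `n` agents, under the Randomized
Death Match rule the superman (agent `0`) wins with probability `1 - 2/n` and the
kryptonite (agent `n-1`) wins with probability `2/(n(n-1))`. -/
theorem stmt13 {n : ℕ} (hn : 3 ≤ n) (T : Tournament n)
    (hT : ∀ i j : Fin n, T.beats i j ↔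
      ((i.1 < j.1 ∧ ¬(i.1 = 0 ∧ j.1 = n - 1)) ∨ (i.1 = n - 1 ∧ j.1 = 0))) :
    rdmProb T Finset.univ ⟨0, by omega⟩ = 1 - 2 / n ∧
    rdmProb T Finset.univ ⟨n - 1, by omega⟩ = 2 / (n * (n - 1)) := by
  have hSK : IsSupermanKryptonite T ⟨0, by omega⟩ ⟨n - 1, by omega⟩ := by
    refine ⟨(hT _ _).mpr (Or.inr ⟨rfl, rfl⟩), fun j hz hL => (hT _ _).mpr (Or.inl ?_),
      fun j hz hL => (hT _ _).mpr (Or.inl ?_)⟩ <;>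
    · simp only [ne_eq, Fin.ext_iff] at hz hL ⊢
      omega
  have hsuperman := hSK.rdmProb_superman (mem_univ _) (mem_univ _)
  have hkryptonite := hSK.rdmProb_kryptonite (mem_univ _) (mem_univ _)
  rw [card_univ, Fintype.card_fin] at hsuperman hkryptonite
  exact ⟨hsuperman, hkryptonite⟩
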